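/- Let β=(β_n)_{n∈ℕ} be a Cantor base with x_β<+∞. Then D'_β = ⋃_{n∈ℕ_{≥1}} X'_{β,n}·D'_{β^(n)} (concatenation of each word of X'_{β,n} with each element of D'_{β^(n)}). Moreover, every finite prefix of ℓ*_β(x_β−1) is a prefix of some element of D'_β. -/

import Mathlib

open Filter Topology

/-- A Cantor real base: a sequence of reals `> 1` whose infinite product diverges to `+∞`. -/
structure IsCantorBase (β : ℕ → ℝ) : Prop where
  one_lt : ∀ n, 1 < β n
  prod_tendsto : Tendsto (fun N => ∏ i ∈ Finset.range N, β i) atTop atTop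

/-- The product `β_0 ⋯ β_n`. -/
noncomputable def prodUpTo (β : ℕ → ℝ) (n : ℕ) : ℝ := ∏ i ∈ Finset.range (n + 1), β i

/-- The shifted base `β^(n) = (β_n, β_{n+1}, …)`. -/
def shiftBase (β : ℕ → ℝ) (n : ℕ) : ℕ → ℝ := fun m => β (n + m)

/-- `x_β = Σ_{n} (⌈β_n⌉ - 1)/(β_0 ⋯ β_n)`. -/
noncomputable def xB (β : ℕ → ℝ) : ℝ := ∑' n, ((⌈β n⌉ : ℝ) - 1) / prodUpTo β n

/-- The condition `x_β < +∞`, i.e. the series defining `x_β` converges. -/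
def XBSummable (β : ℕ → ℝ) : Prop :=
  Summable (fun n => ((⌈β n⌉ : ℝ) - 1) / prodUpTo β n)

/-- `val_β(a) = Σ_n a_n/(β_0 ⋯ β_n)`. -/
noncomputable def valB (β : ℕ → ℝ) (a : ℕ → ℤ) : ℝ := ∑' n, (a n : ℝ) / prodUpTo β n

/-- The digit condition `a_n ∈ [[0, ⌈β_n⌉ - 1]]` for all `n`. -/
def validWord (β : ℕ → ℝ) (a : ℕ → ℤ) : Prop := ∀ n, 0 ≤ a n ∧ a n ≤ ⌈β n⌉ - 1

/-- The flip map `θ_β`. -/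
noncomputable def theta (β : ℕ → ℝ) (a : ℕ → ℤ) : ℕ → ℤ := fun n => ⌈β n⌉ - 1 - a n

/-- The greedy remainders `r_{β,n}(x)`. -/
noncomputable def greedyR (β : ℕ → ℝ) (x : ℝ) : ℕ → ℝ
  | 0 => β 0 * x - (⌊β 0 * x⌋ : ℝ)
  | n + 1 => β (n + 1) * greedyR β x n - (⌊β (n + 1) * greedyR β x n⌋ : ℝ)

/-- The greedy digits `ε_{β,n}(x)`; `greedyDigit β x` is the greedy β-expansion `d_β(x)`. -/
noncomputable def greedyDigit (β : ℕ → ℝ) (x : ℝ) : ℕ → ℤ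
  | 0 => ⌊β 0 * x⌋
  | n + 1 => ⌊β (n + 1) * greedyR β x n⌋

/-- The lazy remainders `s_{β,n}(x)`. -/
noncomputable def lazyS (β : ℕ → ℝ) (x : ℝ) : ℕ → ℝ
  | 0 => β 0 * x - (⌈β 0 * x - xB (shiftBase β 1)⌉ : ℝ)
  | n + 1 => β (n + 1) * lazyS β x n -
      (⌈β (n + 1) * lazyS β x n - xB (shiftBase β (n + 2))⌉ : ℝ)

/-- The lazy digits `ξ_{β,n}(x)`; `lazyDigit β x` is the lazy β-expansion `ℓ_β(x)`. -/
noncomputable def lazyDigit (β : ℕ → ℝ) (x : ℝ) : ℕ → ℤ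
  | 0 => ⌈β 0 * x - xB (shiftBase β 1)⌉
  | n + 1 => ⌈β (n + 1) * lazyS β x n - xB (shiftBase β (n + 2))⌉

/-- Strict lexicographic order on infinite words. -/
def lexLt (a b : ℕ → ℤ) : Prop := ∃ k, (∀ i < k, a i = b i) ∧ a k < b k

/-- Lexicographic order on infinite words. -/
def lexLe (a b : ℕ → ℤ) : Prop := lexLt a b ∨ a = b

/-- `D_β`, the set of greedy β-expansions of points of `[0,1)`. -/
def greedySet (β : ℕ → ℝ) : Set (ℕ → ℤ) :=
  {a | ∃ x ∈ Set.Ico (0 : ℝ) 1, a = greedyDigit β x}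

/-- `D'_β`, the set of lazy β-expansions of points of `(x_β - 1, x_β]`. -/
def lazySet (β : ℕ → ℝ) : Set (ℕ → ℤ) :=
  {a | ∃ x ∈ Set.Ioc (xB β - 1) (xB β), a = lazyDigit β x}

/-- `Δ'_β = ⋃_n D'_{β^(n)}`. -/
def deltaSet (β : ℕ → ℝ) : Set (ℕ → ℤ) := ⋃ n, lazySet (shiftBase β n)


/-!
A lazy expansion is its first digit followed by the lazy expansion of the remainder in the shifted
base. As the pointwise limit of lazy expansions of points decreasing to `x_β - 1`, the word
`ℓ*_β(x_β - 1)` is admissible, has value `x_β - 1`, and each of its tails from position `k` has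
value at least `x_{β^(k)} - 1`. Lazy expansions are lexicographically monotone in the point, so
`ℓ_β(x)` leaves `ℓ*_β(x_β - 1)` upwards at its first difference, and the tail after it is a
lazy expansion in the shifted base. Conversely, such a word is reassembled, digit by digit from
the branching position back to the front, into a point of `(x_β - 1, x_β]` whose lazy expansion
it is.
-/

def shiftWord (a : ℕ → ℤ) (k : ℕ) : ℕ → ℤ := fun m => a (k + m)

section CantorBase

variable {γ : ℕ → ℝ}

lemma shiftBase_zero (γ : ℕ → ℝ) : shiftBase γ 0 = γ := by
  funext m
  simp [shiftBase]

lemma shiftBase_shiftBase (γ : ℕ → ℝ) (k j : ℕ) :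
    shiftBase (shiftBase γ k) j = shiftBase γ (k + j) := by
  funext m
  simp [shiftBase, add_assoc]

lemma shiftWord_zero (a : ℕ → ℤ) : shiftWord a 0 = a := by
  funext m
  simp [shiftWord]

lemma shiftWord_shiftWord (a : ℕ → ℤ) (k j : ℕ) :
    shiftWord (shiftWord a k) j = shiftWord a (k + j) := by
  funext m
  simp [shiftWord, add_assoc]

lemma IsCantorBase.pos (hγ : IsCantorBase γ) (n : ℕ) : 0 < γ n :=
  zero_lt_one.trans (hγ.one_lt n)

lemma prodUpTo_pos (hγ : ∀ n, 0 < γ n) (n : ℕ) : 0 < prodUpTo γ n :=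
  Finset.prod_pos fun i _ => hγ i

lemma prodUpTo_zero (γ : ℕ → ℝ) : prodUpTo γ 0 = γ 0 := by
  simp [prodUpTo]

lemma prodUpTo_succ (γ : ℕ → ℝ) (n : ℕ) :
    prodUpTo γ (n + 1) = prodUpTo γ n * γ (n + 1) :=
  Finset.prod_range_succ _ _

lemma prodUpTo_add (γ : ℕ → ℝ) (k m : ℕ) :
    prodUpTo γ (k + m) = (∏ i ∈ Finset.range k, γ i) * prodUpTo (shiftBase γ k) m :=
  Finset.prod_range_add _ k (m + 1)

lemma IsCantorBase.shift (hγ : IsCantorBase γ) (k : ℕ) : IsCantorBase (shiftBase γ k) where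
  one_lt n := hγ.one_lt (k + n)
  prod_tendsto := by
    have hC : 0 < ∏ i ∈ Finset.range k, γ i := Finset.prod_pos fun i _ => hγ.pos i
    refine ((hγ.prod_tendsto.comp (tendsto_add_atTop_nat k)).atTop_div_const hC).congr fun N => ?_
    rw [Function.comp_apply, add_comm, Finset.prod_range_add, mul_div_cancel_left₀ _ hC.ne']
    rfl

lemma XBSummable.shift (hx : XBSummable γ) (hγ : ∀ n, 0 < γ n) (k : ℕ) :
    XBSummable (shiftBase γ k) := by
  have hC : 0 < ∏ i ∈ Finset.range k, γ i := Finset.prod_pos fun i _ => hγ i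
  refine (((summable_nat_add_iff k).2 hx).mul_left (∏ i ∈ Finset.range k, γ i)).congr
    fun m => ?_
  rw [add_comm m k, prodUpTo_add, ← mul_div_assoc, mul_div_mul_left _ _ hC.ne']
  rfl

lemma validWord.div_prodUpTo_mem_Icc {a : ℕ → ℤ} (ha : validWord γ a) (hγ : ∀ n, 0 < γ n)
    (n : ℕ) :
    (a n : ℝ) / prodUpTo γ n ∈ Set.Icc 0 (((⌈γ n⌉ : ℝ) - 1) / prodUpTo γ n) := by
  have hP := prodUpTo_pos hγ n
  have h0 : (0 : ℝ) ≤ a n := by exact_mod_cast (ha n).1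
  have h1 : (a n : ℝ) ≤ ⌈γ n⌉ - 1 := by exact_mod_cast (ha n).2
  exact ⟨by positivity, by gcongr⟩

lemma validWord.summable {a : ℕ → ℤ} (ha : validWord γ a) (hγ : ∀ n, 0 < γ n)
    (hx : XBSummable γ) : Summable fun n => (a n : ℝ) / prodUpTo γ n :=
  hx.of_nonneg_of_le (fun n => (ha.div_prodUpTo_mem_Icc hγ n).1)
    (fun n => (ha.div_prodUpTo_mem_Icc hγ n).2)

lemma validWord.valB_le_xB {a : ℕ → ℤ} (ha : validWord γ a) (hγ : ∀ n, 0 < γ n)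
    (hx : XBSummable γ) : valB γ a ≤ xB γ :=
  (ha.summable hγ hx).tsum_le_tsum (fun n => (ha.div_prodUpTo_mem_Icc hγ n).2) hx

lemma validWord_ceil_sub_one (hγ : ∀ n, 0 < γ n) : validWord γ fun n => ⌈γ n⌉ - 1 :=
  fun n => ⟨sub_nonneg.2 (Int.one_le_ceil_iff.2 (hγ n)), le_rfl⟩

lemma xB_eq_valB (γ : ℕ → ℝ) : xB γ = valB γ fun n => ⌈γ n⌉ - 1 := by
  simp [xB, valB]

lemma xB_nonneg (hγ : ∀ n, 0 < γ n) : 0 ≤ xB γ := by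
  rw [xB_eq_valB]
  exact tsum_nonneg fun n => ((validWord_ceil_sub_one hγ).div_prodUpTo_mem_Icc hγ n).1

lemma mul_valB_eq_add_valB_shift (h0 : γ 0 ≠ 0) {a : ℕ → ℤ}
    (ha : Summable fun n => (a n : ℝ) / prodUpTo γ n) :
    γ 0 * valB γ a = a 0 + valB (shiftBase γ 1) (shiftWord a 1) := by
  have htail : ∀ m, (a (m + 1) : ℝ) / prodUpTo γ (m + 1) =
      (shiftWord a 1 m : ℝ) / prodUpTo (shiftBase γ 1) m / γ 0 := fun m => by
    rw [add_comm m 1, prodUpTo_add, Finset.prod_range_one, div_mul_eq_div_div_swap]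
    rfl
  rw [valB, ha.tsum_eq_zero_add, prodUpTo_zero, tsum_congr htail, tsum_div_const, valB]
  field_simp

lemma mul_xB (hγ : ∀ n, 0 < γ n) (hx : XBSummable γ) :
    γ 0 * xB γ = ⌈γ 0⌉ - 1 + xB (shiftBase γ 1) := by
  rw [xB_eq_valB, mul_valB_eq_add_valB_shift (hγ 0).ne'
    ((validWord_ceil_sub_one hγ).summable hγ hx), xB_eq_valB]
  push_cast
  rfl

lemma mul_xB_shiftBase (hγ : ∀ n, 0 < γ n) (hx : XBSummable γ) (k : ℕ) :
    γ k * xB (shiftBase γ k) = ⌈γ k⌉ - 1 + xB (shiftBase γ (k + 1)) := by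
  rw [← shiftBase_shiftBase]
  exact mul_xB (fun n => hγ (k + n)) (hx.shift hγ k)

lemma tendsto_xB_shiftBase_div_prodUpTo (γ : ℕ → ℝ) :
    Tendsto (fun n => xB (shiftBase γ (n + 1)) / prodUpTo γ n) atTop (𝓝 0) := by
  refine ((tendsto_sum_nat_add fun n => ((⌈γ n⌉ : ℝ) - 1) / prodUpTo γ n).comp
    (tendsto_add_atTop_nat 1)).congr fun n => ?_
  rw [Function.comp_apply, xB, ← tsum_div_const]
  refine tsum_congr fun k => ?_
  rw [add_comm k, prodUpTo_add, div_div, mul_comm]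
  rfl

end CantorBase

section LazyExpansion

variable {γ : ℕ → ℝ} {x : ℝ}

lemma lazyS_zero_eq (γ : ℕ → ℝ) (x : ℝ) : lazyS γ x 0 = γ 0 * x - lazyDigit γ x 0 := rfl

lemma lazyS_succ_eq (γ : ℕ → ℝ) (x : ℝ) (n : ℕ) :
    lazyS γ x (n + 1) = γ (n + 1) * lazyS γ x n - lazyDigit γ x (n + 1) := rfl

lemma lazy_step_mem {c X X' s : ℝ} (hc : 0 < c) (hX : c * X = ⌈c⌉ - 1 + X')
    (hs : s ∈ Set.Ioc (X - 1) X) :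
    (0 ≤ ⌈c * s - X'⌉ ∧ ⌈c * s - X'⌉ ≤ ⌈c⌉ - 1) ∧
      c * s - ⌈c * s - X'⌉ ∈ Set.Ioc (X' - 1) X' := by
  have hle : c * s ≤ c * X := mul_le_mul_of_nonneg_left hs.2 hc.le
  have hgt : c * (X - 1) < c * s := mul_lt_mul_of_pos_left hs.1 hc
  have hceil := Int.le_ceil c
  have hd0 : (-1 : ℤ) < ⌈c * s - X'⌉ := Int.lt_ceil.2 (by push_cast; nlinarith)
  have hd1 : ⌈c * s - X'⌉ ≤ ⌈c⌉ - 1 := Int.ceil_le.2 (by push_cast; linarith)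
  refine ⟨⟨by omega, hd1⟩, ?_, ?_⟩
  · linarith [Int.ceil_lt_add_one (c * s - X')]
  · linarith [Int.le_ceil (c * s - X')]

lemma lazyS_mem_Ioc (hγ : ∀ n, 0 < γ n) (hx : XBSummable γ)
    (hxm : x ∈ Set.Ioc (xB γ - 1) (xB γ)) (n : ℕ) :
    lazyS γ x n ∈ Set.Ioc (xB (shiftBase γ (n + 1)) - 1) (xB (shiftBase γ (n + 1))) := by
  induction n with
  | zero => exact (lazy_step_mem (hγ 0) (mul_xB hγ hx) hxm).2
  | succ n ih => exact (lazy_step_mem (hγ _) (mul_xB_shiftBase hγ hx _) ih).2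

lemma validWord_lazyDigit (hγ : ∀ n, 0 < γ n) (hx : XBSummable γ)
    (hxm : x ∈ Set.Ioc (xB γ - 1) (xB γ)) : validWord γ (lazyDigit γ x)
  | 0 => (lazy_step_mem (hγ 0) (mul_xB hγ hx) hxm).1
  | n + 1 => (lazy_step_mem (hγ _) (mul_xB_shiftBase hγ hx _) (lazyS_mem_Ioc hγ hx hxm n)).1

lemma lazyS_add (γ : ℕ → ℝ) (x : ℝ) (k m : ℕ) :
    lazyS γ x (k + 1 + m) = lazyS (shiftBase γ (k + 1)) (lazyS γ x k) m := by
  induction m with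
  | zero => simp only [lazyS, shiftBase_shiftBase]; rfl
  | succ m ih =>
    rw [← add_assoc, lazyS.eq_2, lazyS.eq_2, ih, shiftBase_shiftBase]
    rfl

lemma shiftWord_lazyDigit (γ : ℕ → ℝ) (x : ℝ) (k : ℕ) :
    shiftWord (lazyDigit γ x) (k + 1) = lazyDigit (shiftBase γ (k + 1)) (lazyS γ x k) := by
  funext m
  cases m with
  | zero => simp only [shiftWord, lazyDigit, shiftBase_shiftBase]; rfl
  | succ m =>
    rw [shiftWord, ← add_assoc, lazyDigit.eq_2, lazyDigit.eq_2, lazyS_add, shiftBase_shiftBase]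
    rfl

lemma lazyDigit_eq_of_mul_eq {z : ℝ} {a : ℕ → ℤ} (hxz : γ 0 * x = a 0 + z)
    (hz : z ∈ Set.Ioc (xB (shiftBase γ 1) - 1) (xB (shiftBase γ 1)))
    (hza : lazyDigit (shiftBase γ 1) z = shiftWord a 1) : lazyDigit γ x = a := by
  have hd0 : lazyDigit γ x 0 = a 0 := by
    rw [lazyDigit, hxz, Int.ceil_eq_iff]
    constructor <;> linarith [hz.1, hz.2]
  have hs0 : lazyS γ x 0 = z := by
    rw [lazyS_zero_eq, hd0, hxz]
    ring
  funext i
  cases i with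
  | zero => exact hd0
  | succ m =>
    have h := congrFun (shiftWord_lazyDigit γ x 0) m
    rw [hs0, hza] at h
    simpa [shiftWord, add_comm] using h

lemma sum_lazyDigit_add_lazyS (hγ : ∀ n, 0 < γ n) (x : ℝ) (n : ℕ) :
    ∑ k ∈ Finset.range (n + 1), (lazyDigit γ x k : ℝ) / prodUpTo γ k +
      lazyS γ x n / prodUpTo γ n = x := by
  induction n with
  | zero =>
    rw [Finset.sum_range_one, prodUpTo_zero, lazyS_zero_eq]
    field_simp [(hγ 0).ne']
    ring
  | succ n ih =>
    have hP := (prodUpTo_pos hγ n).ne'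
    have hγn := (hγ (n + 1)).ne'
    have hstep : (lazyDigit γ x (n + 1) : ℝ) / (prodUpTo γ n * γ (n + 1)) +
        (γ (n + 1) * lazyS γ x n - lazyDigit γ x (n + 1)) / (prodUpTo γ n * γ (n + 1)) =
        lazyS γ x n / prodUpTo γ n := by
      field_simp
      ring
    rw [Finset.sum_range_succ, prodUpTo_succ, lazyS_succ_eq]
    linarith

lemma hasSum_lazyDigit (hγ : IsCantorBase γ) (hx : XBSummable γ)
    (hxm : x ∈ Set.Ioc (xB γ - 1) (xB γ)) :
    HasSum (fun k => (lazyDigit γ x k : ℝ) / prodUpTo γ k) x := by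
  have hvalid := validWord_lazyDigit hγ.pos hx hxm
  rw [hasSum_iff_tendsto_nat_of_nonneg (fun k => (hvalid.div_prodUpTo_mem_Icc hγ.pos k).1),
    ← tendsto_add_atTop_iff_nat 1]
  have hinv : Tendsto (fun n => (prodUpTo γ n)⁻¹) atTop (𝓝 0) :=
    (hγ.prod_tendsto.comp (tendsto_add_atTop_nat 1)).inv_tendsto_atTop
  have hrem : Tendsto (fun n => lazyS γ x n / prodUpTo γ n) atTop (𝓝 0) := by
    refine tendsto_of_tendsto_of_tendsto_of_le_of_le (by simpa using hinv.neg)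
      (tendsto_xB_shiftBase_div_prodUpTo γ) (fun n => ?_) (fun n => ?_)
    · have hP := prodUpTo_pos hγ.pos n
      have h := (lazyS_mem_Ioc hγ.pos hx hxm n).1
      have := xB_nonneg (γ := shiftBase γ (n + 1)) fun i => hγ.pos (n + 1 + i)
      calc -(prodUpTo γ n)⁻¹ = -1 / prodUpTo γ n := by ring
        _ ≤ lazyS γ x n / prodUpTo γ n := by gcongr; linarith
    · have hP := prodUpTo_pos hγ.pos n
      exact div_le_div_of_nonneg_right (lazyS_mem_Ioc hγ.pos hx hxm n).2 hP.le
  have hsum := (tendsto_const_nhds (x := x)).sub hrem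
  rw [sub_zero] at hsum
  exact hsum.congr fun n => (eq_sub_of_add_eq (sum_lazyDigit_add_lazyS hγ.pos x n)).symm

lemma valB_lazyDigit (hγ : IsCantorBase γ) (hx : XBSummable γ)
    (hxm : x ∈ Set.Ioc (xB γ - 1) (xB γ)) : valB γ (lazyDigit γ x) = x :=
  (hasSum_lazyDigit hγ hx hxm).tsum_eq

lemma lazyS_le_lazyS (hγ : ∀ n, 0 < γ n) {y : ℝ} (hyx : y ≤ x) {n : ℕ}
    (h : ∀ i ≤ n, lazyDigit γ y i = lazyDigit γ x i) : lazyS γ y n ≤ lazyS γ x n := by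
  induction n with
  | zero =>
    rw [lazyS_zero_eq, lazyS_zero_eq, h 0 le_rfl]
    have := hγ 0
    gcongr
  | succ n ih =>
    rw [lazyS_succ_eq, lazyS_succ_eq, h (n + 1) le_rfl]
    have := hγ (n + 1)
    gcongr
    exact ih fun i hi => h i (hi.trans n.le_succ)

lemma lazyDigit_le_lazyDigit (hγ : ∀ n, 0 < γ n) {y : ℝ} (hyx : y ≤ x) {n : ℕ}
    (h : ∀ i < n, lazyDigit γ y i = lazyDigit γ x i) :
    lazyDigit γ y n ≤ lazyDigit γ x n := by
  cases n with
  | zero =>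
    have := hγ 0
    simp only [lazyDigit]
    gcongr
  | succ n =>
    have := hγ (n + 1)
    have hs := lazyS_le_lazyS hγ hyx fun i hi => h i (Nat.lt_succ_of_le hi)
    simp only [lazyDigit]
    gcongr

end LazyExpansion

section Limits

variable {α : Type*} {F : Filter α} {w : α → ℕ → ℤ} {v : ℕ → ℤ}

lemma eventually_forall_lt_eq (hw : Tendsto w F (𝓝 v)) (k : ℕ) :
    ∀ᶠ y in F, ∀ i < k, w y i = v i := by
  have h : ∀ i, ∀ᶠ y in F, w y i = v i := fun i => by
    simpa [nhds_discrete] using tendsto_pi_nhds.1 hw i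
  simpa using (Set.finite_Iio k).eventually_all.2 fun i _ => h i

lemma tendsto_valB {γ : ℕ → ℝ} (hγ : ∀ n, 0 < γ n) (hx : XBSummable γ)
    (hw : Tendsto w F (𝓝 v)) (hvalid : ∀ᶠ y in F, validWord γ (w y)) :
    Tendsto (fun y => valB γ (w y)) F (𝓝 (valB γ v)) := by
  refine tendsto_tsum_of_dominated_convergence hx (fun n => ?_) ?_
  · exact ((continuous_of_discreteTopology (f := fun d : ℤ => (d : ℝ) / prodUpTo γ n)).tendsto
      _).comp (tendsto_pi_nhds.1 hw n)
  · filter_upwards [hvalid] with y hy n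
    obtain ⟨h0, h1⟩ := hy.div_prodUpTo_mem_Icc hγ n
    rwa [Real.norm_eq_abs, abs_of_nonneg h0]

end Limits

section QuasiLazy

variable {β : ℕ → ℝ} {ℓstar : ℕ → ℤ}

lemma eventually_mem_Ioc_xB (β : ℕ → ℝ) :
    ∀ᶠ y in 𝓝[>] (xB β - 1), y ∈ Set.Ioc (xB β - 1) (xB β) :=
  mem_of_superset (Ioo_mem_nhdsGT (by linarith)) Set.Ioo_subset_Ioc_self

lemma validWord_of_tendsto_lazyDigit (hβ : IsCantorBase β) (hx : XBSummable β)
    (hl : Tendsto (lazyDigit β) (𝓝[>] (xB β - 1)) (𝓝 ℓstar)) :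
    validWord β ℓstar := fun i => by
  obtain ⟨y, hy, hyi⟩ :=
    ((eventually_mem_Ioc_xB β).and (eventually_forall_lt_eq hl (i + 1))).exists
  rw [← hyi i i.lt_succ_self]
  exact validWord_lazyDigit hβ.pos hx hy i

lemma valB_eq_xB_sub_one_of_tendsto_lazyDigit (hβ : IsCantorBase β) (hx : XBSummable β)
    (hl : Tendsto (lazyDigit β) (𝓝[>] (xB β - 1)) (𝓝 ℓstar)) :
    valB β ℓstar = xB β - 1 := by
  refine tendsto_nhds_unique (tendsto_valB hβ.pos hx hl ?_)
    ((tendsto_nhdsWithin_of_tendsto_nhds tendsto_id).congr' ?_)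
  · filter_upwards [eventually_mem_Ioc_xB β] with y hy using validWord_lazyDigit hβ.pos hx hy
  · filter_upwards [eventually_mem_Ioc_xB β] with y hy using (valB_lazyDigit hβ hx hy).symm

lemma xB_sub_one_le_valB_shiftWord_of_tendsto_lazyDigit (hβ : IsCantorBase β) (hx : XBSummable β)
    (hl : Tendsto (lazyDigit β) (𝓝[>] (xB β - 1)) (𝓝 ℓstar))
    (k : ℕ) :
    xB (shiftBase β k) - 1 ≤ valB (shiftBase β k) (shiftWord ℓstar k) := by
  cases k with
  | zero =>
    rw [shiftBase_zero, shiftWord_zero, valB_eq_xB_sub_one_of_tendsto_lazyDigit hβ hx hl]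
  | succ k =>
    have hcont : Continuous fun a : ℕ → ℤ => shiftWord a (k + 1) :=
      continuous_pi fun m => continuous_apply _
    have hrem : ∀ᶠ y in 𝓝[>] (xB β - 1), lazyS β y k ∈
        Set.Ioc (xB (shiftBase β (k + 1)) - 1) (xB (shiftBase β (k + 1))) := by
      filter_upwards [eventually_mem_Ioc_xB β] with y hy using lazyS_mem_Ioc hβ.pos hx hy k
    refine ge_of_tendsto (tendsto_valB (hβ.shift _).pos (hx.shift hβ.pos _)
      ((hcont.tendsto ℓstar).comp hl) ?_) ?_
    · filter_upwards [hrem] with y hy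
      rw [Function.comp_apply, shiftWord_lazyDigit]
      exact validWord_lazyDigit (hβ.shift _).pos (hx.shift hβ.pos _) hy
    · filter_upwards [hrem] with y hy
      rw [Function.comp_apply, shiftWord_lazyDigit,
        valB_lazyDigit (hβ.shift _) (hx.shift hβ.pos _) hy]
      exact hy.1.le

end QuasiLazy

section Decomposition

variable {γ : ℕ → ℝ}

lemma exists_mem_Ioc_lazyDigit_eq_of_mul_lt (hγ : ∀ n, 0 < γ n) (hx : XBSummable γ)
    {L z : ℝ} {a : ℕ → ℤ}
    (hz : z ∈ Set.Ioc (xB (shiftBase γ 1) - 1) (xB (shiftBase γ 1)))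
    (hza : lazyDigit (shiftBase γ 1) z = shiftWord a 1) (ha0 : a 0 ≤ ⌈γ 0⌉ - 1)
    (hL : γ 0 * L < a 0 + z) : ∃ x ∈ Set.Ioc L (xB γ), lazyDigit γ x = a := by
  have h0 := hγ 0
  refine ⟨(a 0 + z) / γ 0, ⟨?_, ?_⟩, lazyDigit_eq_of_mul_eq (by field_simp) hz hza⟩
  · rwa [lt_div_iff₀' h0]
  · have : (a 0 : ℝ) ≤ ⌈γ 0⌉ - 1 := by exact_mod_cast ha0
    rw [div_le_iff₀' h0, mul_xB hγ hx]
    linarith [hz.2]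

/-- The point is reassembled from position `n` back to `0`; `hw_tail` keeps every intermediate
remainder above `x_{γ^(k)} - 1`, so each reassembly step is a lazy step. -/
lemma exists_mem_Ioc_lazyDigit_eq_of_lt (hγ : ∀ n, 0 < γ n) (hx : XBSummable γ)
    {w a : ℕ → ℤ} (hw : validWord γ w)
    (hw_tail : ∀ k, xB (shiftBase γ k) - 1 ≤ valB (shiftBase γ k) (shiftWord w k)) {n : ℕ}
    (hpre : ∀ i < n, a i = w i) (hlt : w n < a n) (hle : a n ≤ ⌈γ n⌉ - 1)
    (htail : shiftWord a (n + 1) ∈ lazySet (shiftBase γ (n + 1))) :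
    ∃ x ∈ Set.Ioc (valB γ w) (xB γ), lazyDigit γ x = a := by
  induction n generalizing γ w a with
  | zero =>
    obtain ⟨z, hz, hza⟩ := htail
    refine exists_mem_Ioc_lazyDigit_eq_of_mul_lt hγ hx hz hza.symm hle ?_
    have hw_le := validWord.valB_le_xB (γ := shiftBase γ 1) (a := shiftWord w 1)
      (fun m => hw (1 + m)) (fun m => hγ (1 + m)) (hx.shift hγ 1)
    have : (w 0 : ℝ) + 1 ≤ a 0 := by exact_mod_cast hlt
    rw [mul_valB_eq_add_valB_shift (hγ 0).ne' (hw.summable hγ hx)]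
    linarith [hz.1]
  | succ n ih =>
    have hw_tail1 : ∀ k, xB (shiftBase (shiftBase γ 1) k) - 1 ≤
        valB (shiftBase (shiftBase γ 1) k) (shiftWord (shiftWord w 1) k) := fun k => by
      simpa only [shiftBase_shiftBase, shiftWord_shiftWord] using hw_tail (1 + k)
    have hlt1 : shiftWord w 1 n < shiftWord a 1 n := by
      simpa only [shiftWord, add_comm 1 n] using hlt
    have hle1 : shiftWord a 1 n ≤ ⌈shiftBase γ 1 n⌉ - 1 := by
      simpa only [shiftWord, shiftBase, add_comm 1 n] using hle
    have htail1 :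
        shiftWord (shiftWord a 1) (n + 1) ∈ lazySet (shiftBase (shiftBase γ 1) (n + 1)) := by
      rwa [shiftWord_shiftWord, shiftBase_shiftBase, add_comm 1]
    obtain ⟨z, hz, hza⟩ := ih (γ := shiftBase γ 1) (w := shiftWord w 1) (a := shiftWord a 1)
      (fun m => hγ (1 + m)) (hx.shift hγ 1) (fun m => hw (1 + m)) hw_tail1
      (fun i hi => hpre (1 + i) (by omega)) hlt1 hle1 htail1
    have ha0 : a 0 = w 0 := hpre 0 n.succ_pos
    refine exists_mem_Ioc_lazyDigit_eq_of_mul_lt hγ hx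
      ⟨(hw_tail 1).trans_lt hz.1, hz.2⟩ hza (ha0 ▸ (hw 0).2) ?_
    rw [mul_valB_eq_add_valB_shift (hγ 0).ne' (hw.summable hγ hx), ha0]
    linarith [hz.1]

lemma exists_lt_lazyDigit_of_tendsto {ℓstar : ℕ → ℤ} (hγ : IsCantorBase γ)
    (hx : XBSummable γ) (hl : Tendsto (lazyDigit γ) (𝓝[>] (xB γ - 1)) (𝓝 ℓstar))
    {x : ℝ} (hxm : x ∈ Set.Ioc (xB γ - 1) (xB γ)) :
    ∃ n, (∀ i < n, lazyDigit γ x i = ℓstar i) ∧ ℓstar n < lazyDigit γ x n ∧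
      lazyDigit γ x n ≤ ⌈γ n⌉ - 1 ∧
      shiftWord (lazyDigit γ x) (n + 1) ∈ lazySet (shiftBase γ (n + 1)) := by
  classical
  have hne : ∃ n, lazyDigit γ x n ≠ ℓstar n := by
    by_contra! h
    have hval := valB_lazyDigit hγ hx hxm
    rw [funext h, valB_eq_xB_sub_one_of_tendsto_lazyDigit hγ hx hl] at hval
    linarith [hxm.1]
  set n := Nat.find hne
  have hpre : ∀ i < n, lazyDigit γ x i = ℓstar i := fun i hi => not_not.1 (Nat.find_min hne hi)
  have hbelow : ∀ᶠ y in 𝓝[>] (xB γ - 1), y ∈ Set.Ioo (xB γ - 1) x := Ioo_mem_nhdsGT hxm.1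
  obtain ⟨y, ⟨-, hyx⟩, hy_pre⟩ := (hbelow.and (eventually_forall_lt_eq hl (n + 1))).exists
  have hle : lazyDigit γ y n ≤ lazyDigit γ x n :=
    lazyDigit_le_lazyDigit hγ.pos hyx.le fun i hi => (hy_pre i (by omega)).trans (hpre i hi).symm
  rw [hy_pre n n.lt_succ_self] at hle
  exact ⟨n, hpre, lt_of_le_of_ne hle (Nat.find_spec hne).symm,
    (validWord_lazyDigit hγ.pos hx hxm n).2,
    lazyS γ x n, lazyS_mem_Ioc hγ.pos hx hxm n, shiftWord_lazyDigit γ x n⟩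

end Decomposition

/-- The union over `n ≥ 1` is reindexed by `n + 1`: the words of `X'_{β,n+1}` are
`ℓ_0⋯ℓ_{n-1}s` with `s ∈ [[ℓ_n+1, ⌈β_n⌉-1]]`. -/
theorem lazySet_decomposition (β : ℕ → ℝ) (hβ : IsCantorBase β) (hx : XBSummable β)
    (ℓstar : ℕ → ℤ)
    (hl : Tendsto (lazyDigit β) (nhdsWithin (xB β - 1) (Set.Ioi (xB β - 1))) (nhds ℓstar)) :
    (lazySet β = {a | ∃ n : ℕ, (∀ i < n, a i = ℓstar i) ∧
      ℓstar n < a n ∧ a n ≤ ⌈β n⌉ - 1 ∧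
      (fun m => a (n + 1 + m)) ∈ lazySet (shiftBase β (n + 1))}) ∧
    ∀ k : ℕ, ∃ a ∈ lazySet β, ∀ i < k, a i = ℓstar i := by
  refine ⟨Set.ext fun a => ⟨?_, ?_⟩, fun k => ?_⟩
  · rintro ⟨x, hxm, rfl⟩
    exact exists_lt_lazyDigit_of_tendsto hβ hx hl hxm
  · rintro ⟨n, hpre, hlt, hle, htail⟩
    obtain ⟨x, ⟨hx_gt, hx_le⟩, rfl⟩ := exists_mem_Ioc_lazyDigit_eq_of_lt hβ.pos hx
      (validWord_of_tendsto_lazyDigit hβ hx hl)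
      (xB_sub_one_le_valB_shiftWord_of_tendsto_lazyDigit hβ hx hl) hpre hlt hle htail
    rw [valB_eq_xB_sub_one_of_tendsto_lazyDigit hβ hx hl] at hx_gt
    exact ⟨x, ⟨hx_gt, hx_le⟩, rfl⟩
  · obtain ⟨y, hy, hy_pre⟩ :=
      ((eventually_mem_Ioc_xB β).and (eventually_forall_lt_eq hl k)).exists
    exact ⟨lazyDigit β y, ⟨y, hy, rfl⟩, hy_pre⟩
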